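/- One has the operator inequality (A + B) E (A + B)* ≤ C·D with C := (1 + (1 + 2‖D^{-1/2} V D^{-1/2}‖)^{1/2})². -/

import Mathlib

/- Context: `H` a complex Hilbert space, `D` bounded self-adjoint with `D ≥ δ·1`, `δ > 0`,
`V` a positive trace-class operator, `E := (D^{1/2}(D+2V)D^{1/2})^{1/2}`,
`A := D^{1/2}E^{-1/2}`, `B := D^{-1/2}E^{1/2}`.
Statement 12: `(A + B) E (A + B)* ≤ C·D` with `C := (1 + (1 + 2‖D^{-1/2}VD^{-1/2}‖)^{1/2})²`. -/

open scoped InnerProductSpace ENNReal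

set_option synthInstance.maxHeartbeats 1000000
set_option maxHeartbeats 1000000

universe u

variable {H : Type u} [NormedAddCommGroup H] [InnerProductSpace ℂ H] [CompleteSpace H]

/-- `|T| := (T*T)^{1/2}` via the continuous functional calculus. -/
noncomputable def opAbs (T : H →L[ℂ] H) : H →L[ℂ] H :=
  CFC.sqrt (ContinuousLinearMap.adjoint T * T)

/-- `T` is Hilbert–Schmidt if `∑_i ‖T e_i‖² < ∞` for some orthonormal (Hilbert) basis. -/
def IsHilbertSchmidt (T : H →L[ℂ] H) : Prop :=
  ∃ (ι : Type u) (b : HilbertBasis ι ℂ H), Summable fun i => ‖T (b i)‖ ^ 2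

/-- `T` is trace class if `∑_i ⟨e_i, (T*T)^{1/2} e_i⟩ < ∞` for some orthonormal basis. -/
def IsTraceClass (T : H →L[ℂ] H) : Prop :=
  ∃ (ι : Type u) (b : HilbertBasis ι ℂ H),
    Summable fun i => (⟪b i, opAbs T (b i)⟫_ℂ).re

/-- The squared Hilbert–Schmidt norm `∑_i ‖T e_i‖²`, valued in `ℝ≥0∞`
(basis independent). -/
noncomputable def eHSsq {ι : Type u} (b : HilbertBasis ι ℂ H) (T : H →L[ℂ] H) : ℝ≥0∞ :=
  ∑' i, (‖T (b i)‖₊ : ℝ≥0∞) ^ 2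

/-- The trace norm `‖T‖₁ = ∑_i ⟨e_i, |T| e_i⟩ = ∑_i ‖ |T|^{1/2} e_i ‖²`, valued in `ℝ≥0∞`
(basis independent). -/
noncomputable def eTraceNorm {ι : Type u} (b : HilbertBasis ι ℂ H) (T : H →L[ℂ] H) : ℝ≥0∞ :=
  ∑' i, (‖CFC.sqrt (opAbs T) (b i)‖₊ : ℝ≥0∞) ^ 2

/-- `E := (D^{1/2}(D+2V)D^{1/2})^{1/2}`. -/
noncomputable def bogE (D V : H →L[ℂ] H) : H →L[ℂ] H :=
  CFC.sqrt (CFC.sqrt D * (D + (2 : ℝ) • V) * CFC.sqrt D)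

/-- `A := D^{1/2} E^{-1/2}`. -/
noncomputable def bogA (D V : H →L[ℂ] H) : H →L[ℂ] H :=
  CFC.sqrt D * Ring.inverse (CFC.sqrt (bogE D V))

/-- `B := D^{-1/2} E^{1/2}`. -/
noncomputable def bogB (D V : H →L[ℂ] H) : H →L[ℂ] H :=
  Ring.inverse (CFC.sqrt D) * CFC.sqrt (bogE D V)

/-!
Both square roots telescope: `A E A* = D` and `B E B* = D + 2V`. For every `s > 0` the cross
terms are absorbed by `0 ≤ (sA - B) E (sA - B)*`, so
`(A + B) E (A + B)* ≤ (1 + s) D + (1 + s⁻¹)(D + 2V)`. Conjugating `W ≤ ‖W‖` by `D^{1/2}`, where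
`W = D^{-1/2} V D^{-1/2}`, gives `D + 2V ≤ s² D` for `s = (1 + 2‖W‖)^{1/2}`, and
`(1 + s) + (1 + s⁻¹) s² = (1 + s)²`.
-/

section StarOrderedAlgebra

variable {A : Type*} [Ring A] [StarRing A] [PartialOrder A] [StarOrderedRing A] [Algebra ℝ A]
  [StarModule ℝ A] [PosSMulMono ℝ A]

lemma add_mul_mul_star_add_le {e : A} (he : 0 ≤ e) (x y : A) {s : ℝ} (hs : 0 < s) :
    (x + y) * e * star (x + y) ≤ (1 + s) • (x * e * star x) + (1 + s⁻¹) • (y * e * star y) := by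
  have hsq : 0 ≤ s⁻¹ • ((s • x - y) * e * star (s • x - y)) :=
    smul_nonneg (inv_nonneg.2 hs.le) (star_right_conjugate_nonneg he _)
  rw [← sub_nonneg]
  convert hsq using 1
  simp only [star_add, star_sub, star_smul, star_trivial, add_mul, mul_add, sub_mul, mul_sub,
    smul_mul_assoc, mul_smul_comm]
  match_scalars <;> field_simp <;> ring

end StarOrderedAlgebra

namespace CFC

open Ring

variable {A : Type*} [CStarAlgebra A] [PartialOrder A] [StarOrderedRing A]

lemma le_norm_conjSqrt_ringInverse_smul {c a : A} (hc : IsStrictlyPositive c)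
    (ha : IsSelfAdjoint a) : a ≤ ‖conjSqrt c⁻¹ʳ a‖ • c := by
  have hsa : IsSelfAdjoint (conjSqrt c⁻¹ʳ a) := by
    rw [conjSqrt_apply]
    exact ha.conjugate_self (sqrt_nonneg _).isSelfAdjoint
  calc a = conjSqrt c (conjSqrt c⁻¹ʳ a) := (conjSqrt_conjSqrt_ringInverse c a).symm
    _ ≤ conjSqrt c (algebraMap ℝ A ‖conjSqrt c⁻¹ʳ a‖) :=
      conjSqrt_le_conjSqrt hsa.le_algebraMap_norm_self
    _ = ‖conjSqrt c⁻¹ʳ a‖ • c := by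
      rw [Algebra.algebraMap_eq_smul_one, map_smul, conjSqrt_one c]

lemma add_two_smul_le_smul {c a : A} (hc : IsStrictlyPositive c) (ha : IsSelfAdjoint a) :
    c + (2 : ℝ) • a ≤ (1 + 2 * ‖conjSqrt c⁻¹ʳ a‖) • c := by
  calc c + (2 : ℝ) • a ≤ c + (2 : ℝ) • ‖conjSqrt c⁻¹ʳ a‖ • c := by
        gcongr; exact le_norm_conjSqrt_ringInverse_smul hc ha
    _ = (1 + 2 * ‖conjSqrt c⁻¹ʳ a‖) • c := by module

lemma sqrt_mul_ringInverse_sqrt_conj {d e : A} (hd : 0 ≤ d) (he : IsStrictlyPositive e) :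
    sqrt d * (sqrt e)⁻¹ʳ * e * star (sqrt d * (sqrt e)⁻¹ʳ) = d := by
  have h : (sqrt e)⁻¹ʳ * e * (sqrt e)⁻¹ʳ = 1 := by
    rw [← sqrt_ringInverse, ← conjSqrt_apply, conjSqrt_ringInverse_self e]
  calc sqrt d * (sqrt e)⁻¹ʳ * e * star (sqrt d * (sqrt e)⁻¹ʳ)
      = sqrt d * ((sqrt e)⁻¹ʳ * e * (sqrt e)⁻¹ʳ) * sqrt d := by
        rw [star_mul, (sqrt_nonneg d).isSelfAdjoint.star_eq,
          (sqrt_nonneg e).isSelfAdjoint.ringInverse.star_eq]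
        simp only [mul_assoc]
    _ = d := by rw [h, mul_one, sqrt_mul_sqrt_self d]

lemma ringInverse_sqrt_mul_sqrt_conj (d : A) {e : A} (he : 0 ≤ e) :
    (sqrt d)⁻¹ʳ * sqrt e * e * star ((sqrt d)⁻¹ʳ * sqrt e) = conjSqrt d⁻¹ʳ (e * e) := by
  have hsq := sqrt_mul_sqrt_self e he
  have hmid : sqrt e * e * sqrt e = e * e := by
    nth_rw 2 [← hsq]
    rw [← mul_assoc, hsq, mul_assoc, hsq]
  calc (sqrt d)⁻¹ʳ * sqrt e * e * star ((sqrt d)⁻¹ʳ * sqrt e)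
      = (sqrt d)⁻¹ʳ * (sqrt e * e * sqrt e) * (sqrt d)⁻¹ʳ := by
        rw [star_mul, (sqrt_nonneg e).isSelfAdjoint.star_eq,
          (sqrt_nonneg d).isSelfAdjoint.ringInverse.star_eq]
        simp only [mul_assoc]
    _ = conjSqrt d⁻¹ʳ (e * e) := by rw [hmid, conjSqrt_apply, sqrt_ringInverse]

end CFC

section Bogoliubov

open CFC Ring

variable {D V : H →L[ℂ] H}

lemma isStrictlyPositive_conjSqrt_add_two_smul (hD : IsStrictlyPositive D) (hV : 0 ≤ V) :
    IsStrictlyPositive (conjSqrt D (D + (2 : ℝ) • V)) :=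
  (isStrictlyPositive_conjSqrt_iff D _).2 (hD.add_nonneg (smul_nonneg zero_le_two hV))

lemma isStrictlyPositive_bogE (hD : IsStrictlyPositive D) (hV : 0 ≤ V) :
    IsStrictlyPositive (bogE D V) :=
  (isStrictlyPositive_conjSqrt_add_two_smul hD hV).sqrt

lemma bogA_mul_bogE_mul_star (hD : IsStrictlyPositive D) (hV : 0 ≤ V) :
    bogA D V * bogE D V * star (bogA D V) = D :=
  sqrt_mul_ringInverse_sqrt_conj hD.nonneg (isStrictlyPositive_bogE hD hV)

lemma bogB_mul_bogE_mul_star (hD : IsStrictlyPositive D) (hV : 0 ≤ V) :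
    bogB D V * bogE D V * star (bogB D V) = D + (2 : ℝ) • V := by
  rw [bogB, ringInverse_sqrt_mul_sqrt_conj _ (isStrictlyPositive_bogE hD hV).nonneg, bogE,
    ← conjSqrt_apply, sqrt_mul_sqrt_self _ (isStrictlyPositive_conjSqrt_add_two_smul hD hV).nonneg,
    conjSqrt_ringInverse_conjSqrt D _]

end Bogoliubov

theorem ApB_E_ApBstar_le_CD_general
    (δ : ℝ) (hδ : 0 < δ) (D V : H →L[ℂ] H)
    (hDδ : δ • (1 : H →L[ℂ] H) ≤ D)
    (hV : 0 ≤ V) :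
    (bogA D V + bogB D V) * bogE D V * ContinuousLinearMap.adjoint (bogA D V + bogB D V)
      ≤ ((1 + Real.sqrt (1 + 2 * ‖Ring.inverse (CFC.sqrt D) * V * Ring.inverse (CFC.sqrt D)‖)) ^ 2)
          • D := by
  have hD : IsStrictlyPositive D := (IsStrictlyPositive.smul hδ isStrictlyPositive_one).of_le hDδ
  rw [← CFC.sqrt_ringInverse, ← CFC.conjSqrt_apply, ← ContinuousLinearMap.star_eq_adjoint]
  set s := √(1 + 2 * ‖CFC.conjSqrt (Ring.inverse D) V‖)
  have hs : 0 < s := Real.sqrt_pos.2 (by positivity)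
  have hs2 : s ^ 2 = 1 + 2 * ‖CFC.conjSqrt (Ring.inverse D) V‖ := Real.sq_sqrt (by positivity)
  calc _ ≤ (1 + s) • D + (1 + s⁻¹) • (D + (2 : ℝ) • V) := by
        simpa only [bogA_mul_bogE_mul_star hD hV, bogB_mul_bogE_mul_star hD hV] using
          add_mul_mul_star_add_le (isStrictlyPositive_bogE hD hV).nonneg (bogA D V) (bogB D V) hs
    _ ≤ (1 + s) • D + (1 + s⁻¹) • (s ^ 2 • D) := by
        rw [hs2]; gcongr; exact CFC.add_two_smul_le_smul hD hV.isSelfAdjoint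
    _ = (1 + s) ^ 2 • D := by match_scalars; field_simp; ring

theorem ApB_E_ApBstar_le_CD
    (δ : ℝ) (hδ : 0 < δ) (D V : H →L[ℂ] H)
    (hD : IsSelfAdjoint D) (hDδ : δ • (1 : H →L[ℂ] H) ≤ D)
    (hV : 0 ≤ V) (hVtc : IsTraceClass V) :
    (bogA D V + bogB D V) * bogE D V * ContinuousLinearMap.adjoint (bogA D V + bogB D V)
      ≤ ((1 + Real.sqrt (1 + 2 * ‖Ring.inverse (CFC.sqrt D) * V * Ring.inverse (CFC.sqrt D)‖)) ^ 2)
          • D :=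
  ApB_E_ApBstar_le_CD_general δ hδ D V hDδ hV
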